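/- arXiv:1405.6770 — 7 statements merged into one kernel-verified Lean document; each statement's English description precedes it below -/
import Mathlib

section
/- For every matrix X : Matrix n n ℂ, the dissipation functional of the Heisenberg (Lindblad) generator satisfies the identity 𝓖(Xᴴ*X) - 𝓖(Xᴴ)*X - Xᴴ*𝓖(X) = (X*L - L*X)ᴴ*(X*L - L*X); in particular, 𝓖(Xᴴ*X) - 𝓖(Xᴴ)*X - Xᴴ*𝓖(X) is positive semidefinite. -/
open Matrix ComplexOrder

variable {n : Type*}

/-- The Heisenberg (Lindblad) generator
`𝓖(X) = -i·(X*H - H*X) + Lᴴ*X*L - (1/2)·(Lᴴ*L*X + X*Lᴴ*L)`. -/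
noncomputable def heisGen [Fintype n] [DecidableEq n] (H L X : Matrix n n ℂ) : Matrix n n ℂ :=
  -Complex.I • (X * H - H * X) + Lᴴ * X * L - (1/2 : ℂ) • (Lᴴ * L * X + X * (Lᴴ * L))

/-- The Schrödinger (predual) generator
`𝓛(ρ) = -i·(H*ρ - ρ*H) + L*ρ*Lᴴ - (1/2)·(Lᴴ*L*ρ + ρ*Lᴴ*L)`. -/
noncomputable def schrodGen [Fintype n] [DecidableEq n] (H L ρ : Matrix n n ℂ) : Matrix n n ℂ :=
  -Complex.I • (H * ρ - ρ * H) + L * ρ * Lᴴ - (1/2 : ℂ) • (Lᴴ * L * ρ + ρ * (Lᴴ * L))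

/-! The dissipation functional `𝓖(Xᴴ X) - 𝓖(Xᴴ) X - Xᴴ 𝓖(X)` is the failure of the Leibniz rule
for `𝓖` at `(Xᴴ, X)`. This defect is additive in `𝓖`, vanishes on the Hamiltonian part
(a commutator, hence a derivation), and is explicit on the jump term `Lᴴ X L` and on the
anticommutator with `Lᴴ L`; the three contributions assemble into
`(Lᴴ Xᴴ - Xᴴ Lᴴ)(X L - L X) = (X L - L X)ᴴ (X L - L X)`. -/

section LeibnizDefect

variable {R : Type*} [Ring R]

def leibnizDefect (Φ : R → R) (a b : R) : R := Φ (a * b) - Φ a * b - a * Φ b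

theorem leibnizDefect_add (Φ Ψ : R → R) (a b : R) :
    leibnizDefect (Φ + Ψ) a b = leibnizDefect Φ a b + leibnizDefect Ψ a b := by
  simp only [leibnizDefect, Pi.add_apply]
  noncomm_ring

theorem leibnizDefect_sub (Φ Ψ : R → R) (a b : R) :
    leibnizDefect (Φ - Ψ) a b = leibnizDefect Φ a b - leibnizDefect Ψ a b := by
  simp only [leibnizDefect, Pi.sub_apply]
  noncomm_ring

theorem leibnizDefect_smul {S : Type*} [Monoid S] [DistribMulAction S R]
    [IsScalarTower S R R] [SMulCommClass S R R] (c : S) (Φ : R → R) (a b : R) :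
    leibnizDefect (c • Φ) a b = c • leibnizDefect Φ a b := by
  simp only [leibnizDefect, Pi.smul_apply, smul_mul_assoc, mul_smul_comm, smul_sub]

theorem leibnizDefect_commutator (h a b : R) :
    leibnizDefect (fun x => x * h - h * x) a b = 0 := by
  simp only [leibnizDefect]
  noncomm_ring

theorem leibnizDefect_anticommutator (k a b : R) :
    leibnizDefect (fun x => k * x + x * k) a b = -(a * k * b + a * k * b) := by
  simp only [leibnizDefect]
  noncomm_ring

theorem leibnizDefect_sandwich (m l a b : R) :
    leibnizDefect (fun x => m * x * l) a b = m * a * b * l - m * a * l * b - a * m * b * l := by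
  simp only [leibnizDefect]
  noncomm_ring

end LeibnizDefect

theorem heisGen_eq [Fintype n] [DecidableEq n] (H L : Matrix n n ℂ) :
    heisGen H L = -Complex.I • (fun X => X * H - H * X) + (fun X => Lᴴ * X * L)
      - (1/2 : ℂ) • (fun X => Lᴴ * L * X + X * (Lᴴ * L)) :=
  rfl

theorem leibnizDefect_heisGen [Fintype n] [DecidableEq n] (H L A B : Matrix n n ℂ) :
    leibnizDefect (heisGen H L) A B = (Lᴴ * A - A * Lᴴ) * (B * L - L * B) := by
  rw [heisGen_eq, leibnizDefect_sub, leibnizDefect_add, leibnizDefect_smul, leibnizDefect_smul,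
    leibnizDefect_commutator, leibnizDefect_sandwich, leibnizDefect_anticommutator, smul_zero,
    zero_add, smul_neg, ← two_smul ℂ, smul_smul, one_div, inv_mul_cancel₀ two_ne_zero, one_smul]
  noncomm_ring

theorem dissipation_functional_eq_and_posSemidef_general
    [Fintype n] [DecidableEq n]
    (H L : Matrix n n ℂ) (X : Matrix n n ℂ) :
    heisGen H L (Xᴴ * X) - heisGen H L Xᴴ * X - Xᴴ * heisGen H L X
        = (X * L - L * X)ᴴ * (X * L - L * X)
      ∧ (heisGen H L (Xᴴ * X) - heisGen H L Xᴴ * X - Xᴴ * heisGen H L X).PosSemidef := by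
  have key : heisGen H L (Xᴴ * X) - heisGen H L Xᴴ * X - Xᴴ * heisGen H L X
      = (X * L - L * X)ᴴ * (X * L - L * X) := by
    rw [conjTranspose_sub, conjTranspose_mul, conjTranspose_mul]
    exact leibnizDefect_heisGen H L Xᴴ X
  exact ⟨key, key ▸ posSemidef_conjTranspose_mul_self _⟩

/-- the dissipation functional equals `(X*L - L*X)ᴴ*(X*L - L*X)`;
in particular it is positive semidefinite. -/
theorem dissipation_functional_eq_and_posSemidef
    [Fintype n] [DecidableEq n] [Nonempty n]
    (H L : Matrix n n ℂ) (hH : H.IsHermitian) (X : Matrix n n ℂ) :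
    heisGen H L (Xᴴ * X) - heisGen H L Xᴴ * X - Xᴴ * heisGen H L X
        = (X * L - L * X)ᴴ * (X * L - L * X)
      ∧ (heisGen H L (Xᴴ * X) - heisGen H L Xᴴ * X - Xᴴ * heisGen H L X).PosSemidef :=
  dissipation_functional_eq_and_posSemidef_general H L X
end

section
/- For every Hermitian idempotent P : Matrix n n ℂ (P Hermitian and P*P = P), one has P*𝓖(P)*P = -(P*Lᴴ*(1 - P)*L*P); in particular P*𝓖(P)*P is negative semidefinite. -/
open Matrix ComplexOrder

variable {n : Type*}

open scoped MatrixOrder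

theorem IsIdempotentElem.mul_heisGen_self_mul [Fintype n] [DecidableEq n]
    (H L : Matrix n n ℂ) {P : Matrix n n ℂ} (hP : IsIdempotentElem P) :
    P * heisGen H L P * P = -(P * Lᴴ * (1 - P) * L * P) := by
  -- The sandwich kills the Hamiltonian commutator and turns the anticommutator into `2 P Lᴴ L P`.
  have hPP : ∀ X : Matrix n n ℂ, P * (P * X) = P * X := fun X => by
    rw [← mul_assoc, hP.eq]
  simp only [heisGen, mul_sub, sub_mul, mul_add, add_mul, smul_mul_assoc,
    Matrix.mul_smul, mul_one, mul_assoc, hP.eq, hPP]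
  rw [sub_self, smul_zero, zero_add, ← two_smul ℂ, smul_smul]
  norm_num

theorem IsStarProjection.star_mul_one_sub_mul_nonneg {R : Type*} [Ring R] [PartialOrder R]
    [StarRing R] [StarOrderedRing R] {p : R} (hp : IsStarProjection p) (x : R) :
    0 ≤ star x * (1 - p) * x :=
  star_left_conjugate_nonneg hp.one_sub_nonneg x

theorem projection_generator_sandwich_general
    [Fintype n] [DecidableEq n]
    (H L : Matrix n n ℂ)
    (P : Matrix n n ℂ) (hP : P.IsHermitian) (hP2 : P * P = P) :
    P * heisGen H L P * P = -(P * Lᴴ * (1 - P) * L * P)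
      ∧ (-(P * heisGen H L P * P)).PosSemidef := by
  have hsandwich := IsIdempotentElem.mul_heisGen_self_mul H L hP2
  refine ⟨hsandwich, ?_⟩
  have hconj : P * Lᴴ * (1 - P) * L * P = star (L * P) * (1 - P) * (L * P) := by
    simp only [star_eq_conjTranspose, conjTranspose_mul, hP.eq, mul_assoc]
  rw [hsandwich, neg_neg, hconj, ← nonneg_iff_posSemidef]
  exact IsStarProjection.star_mul_one_sub_mul_nonneg ⟨hP2, hP⟩ _

/-- for every Hermitian idempotent `P`,
`P*𝓖(P)*P = -(P*Lᴴ*(1-P)*L*P)`; in particular `P*𝓖(P)*P` is negative semidefinite. -/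
theorem projection_generator_sandwich
    [Fintype n] [DecidableEq n] [Nonempty n]
    (H L : Matrix n n ℂ) (hH : H.IsHermitian)
    (P : Matrix n n ℂ) (hP : P.IsHermitian) (hP2 : P * P = P) :
    P * heisGen H L P * P = -(P * Lᴴ * (1 - P) * L * P)
      ∧ (-(P * heisGen H L P * P)).PosSemidef :=
  projection_generator_sandwich_general H L P hP hP2
end

section
/- Let ρ be an invariant state and let P : Matrix n n ℂ be its support projection, i.e. P is Hermitian, P*P = P, and the range of the linear map x ↦ P.mulVec x equals the range of x ↦ ρ.mulVec x. Then 𝓖(P) is positive semidefinite (the support projection of an invariant state is subharmonic). -/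
/-!
Write `𝓛(ρ) = LρLᴴ + Gρ + ρGᴴ` and `𝓖(X) = LᴴXL + GᴴX + XG` with `G = -iH - ½LᴴL`, so that
`G + Gᴴ = -LᴴL`. Put `Q = 1 - P`. As `Qρ = ρQ = 0`, compressing `𝓛(ρ) = 0` by `Q` on both sides
leaves `(QL)ρ(QL)ᴴ = 0`, whence `QLρ = 0` by positivity, and then `Q𝓛(ρ) = QGρ = 0`. Because `P` and
`ρ` have the same range, this gives `QLP = QGP = 0`: the range of `P` is invariant under `L` and `G`.
For such a projection all blocks of `𝓖(P)` but the `Q`-`Q` one vanish, and `𝓖(P) = (PLQ)ᴴ(PLQ)`.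
-/

open Matrix ComplexOrder

variable {n : Type*}

theorem IsStarProjection.star_mul_mul_add_star_mul_add_mul_eq {R : Type*} [Ring R] [StarRing R]
    {p l g : R} (hp : IsStarProjection p) (hl : (1 - p) * l * p = 0) (hg : (1 - p) * g * p = 0)
    (hsum : g + star g = -(star l * l)) :
    star l * p * l + star g * p + p * g = star (p * l * (1 - p)) * (p * l * (1 - p)) := by
  have hself : star p = p := hp.isSelfAdjoint
  have hl' : p * star l * (1 - p) = 0 := by
    simpa only [star_mul, star_sub, star_one, hself, star_zero, mul_assoc] using congrArg star hl
  have hg' : p * star g * (1 - p) = 0 := by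
    simpa only [star_mul, star_sub, star_one, hself, star_zero, mul_assoc] using congrArg star hg
  simp only [star_mul, star_sub, star_one, hself]
  linear_combination (norm := noncomm_ring)
    -((1 - p) * star l) * hp.isIdempotentElem.eq * (l * (1 - p)) + p * hsum + hsum * p
      - p * hsum * p - star l * hl + p * star l * hl - hl' * l - hg - hg'

namespace Matrix

variable {m k l o R : Type*}

theorem mul_eq_zero_of_range_mulVecLin_le [CommSemiring R] [Fintype k] [Fintype l] [Fintype m]
    {A : Matrix m k R} {B : Matrix m l R}
    (h : LinearMap.range A.mulVecLin ≤ LinearMap.range B.mulVecLin)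
    {X : Matrix o m R} (hX : X * B = 0) : X * A = 0 := by
  refine ext_iff_mulVec.mpr fun v ↦ ?_
  obtain ⟨u, hu⟩ := h ⟨v, rfl⟩
  rw [mulVecLin_apply, mulVecLin_apply] at hu
  rw [← mulVec_mulVec, ← hu, mulVec_mulVec, hX, zero_mulVec, zero_mulVec]

theorem PosSemidef.mul_eq_zero_of_mul_mul_conjTranspose_eq_zero {𝕜 : Type*} [RCLike 𝕜]
    [Fintype n] {ρ : Matrix n n 𝕜} (hρ : ρ.PosSemidef) {A : Matrix m n 𝕜}
    (h : A * ρ * Aᴴ = 0) : A * ρ = 0 := by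
  classical
  open scoped MatrixOrder in
  obtain ⟨B, rfl⟩ := CStarAlgebra.nonneg_iff_eq_star_mul_self.mp hρ.nonneg
  have hAB : A * Bᴴ = 0 := by
    rw [← self_mul_conjTranspose_eq_zero, conjTranspose_mul, conjTranspose_conjTranspose]
    simpa only [star_eq_conjTranspose, Matrix.mul_assoc] using h
  rw [star_eq_conjTranspose, ← Matrix.mul_assoc, hAB, Matrix.zero_mul]

end Matrix

section Lindblad

variable [Fintype n]

noncomputable def lindbladDrift (H L : Matrix n n ℂ) : Matrix n n ℂ :=
  -Complex.I • H - (1/2 : ℂ) • (Lᴴ * L)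

variable {H : Matrix n n ℂ} (L : Matrix n n ℂ)

theorem conjTranspose_lindbladDrift (hH : H.IsHermitian) :
    (lindbladDrift H L)ᴴ = Complex.I • H - (1/2 : ℂ) • (Lᴴ * L) := by
  simp [lindbladDrift, conjTranspose_sub, conjTranspose_smul, hH.eq]

theorem lindbladDrift_add_conjTranspose (hH : H.IsHermitian) :
    lindbladDrift H L + (lindbladDrift H L)ᴴ = -(Lᴴ * L) := by
  rw [conjTranspose_lindbladDrift L hH, lindbladDrift]
  module

variable [DecidableEq n]

theorem heisGen_eq_s2 (hH : H.IsHermitian) (X : Matrix n n ℂ) :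
    heisGen H L X = Lᴴ * X * L + (lindbladDrift H L)ᴴ * X + X * lindbladDrift H L := by
  rw [conjTranspose_lindbladDrift L hH, heisGen, lindbladDrift]
  simp only [sub_mul, mul_sub, smul_mul_assoc, mul_smul_comm, Matrix.mul_assoc]
  module

theorem schrodGen_eq (hH : H.IsHermitian) (ρ : Matrix n n ℂ) :
    schrodGen H L ρ = L * ρ * Lᴴ + lindbladDrift H L * ρ + ρ * (lindbladDrift H L)ᴴ := by
  rw [conjTranspose_lindbladDrift L hH, schrodGen, lindbladDrift]
  simp only [sub_mul, mul_sub, smul_mul_assoc, mul_smul_comm, Matrix.mul_assoc]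
  module

end Lindblad

theorem support_projection_subharmonic_general
    [Fintype n] [DecidableEq n]
    (H L : Matrix n n ℂ) (hH : H.IsHermitian)
    (ρ : Matrix n n ℂ) (hρ : ρ.PosSemidef)
    (hinv : schrodGen H L ρ = 0)
    (P : Matrix n n ℂ) (hP : P.IsHermitian) (hP2 : P * P = P)
    (hsupp : LinearMap.range P.mulVecLin = LinearMap.range ρ.mulVecLin) :
    (heisGen H L P).PosSemidef := by
  have hPproj : IsStarProjection P := ⟨hP2, hP.isSelfAdjoint⟩
  rw [schrodGen_eq L hH] at hinv
  set G := lindbladDrift H L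
  set Q := 1 - P
  have hQ : Qᴴ = Q := hPproj.one_sub.isSelfAdjoint
  have hQρ : Q * ρ = 0 := mul_eq_zero_of_range_mulVecLin_le hsupp.ge hPproj.one_sub_mul_self
  have hρQ : ρ * Q = 0 := by
    simpa only [conjTranspose_mul, hQ, hρ.isHermitian.eq, conjTranspose_zero]
      using congrArg conjTranspose hQρ
  have hQLρ : Q * L * ρ = 0 := by
    refine hρ.mul_eq_zero_of_mul_mul_conjTranspose_eq_zero ?_
    rw [conjTranspose_mul, hQ]
    linear_combination (norm := noncomm_ring) Q * hinv * Q - Q * G * hρQ - hQρ * Gᴴ * Q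
  have hQGρ : Q * G * ρ = 0 := by
    linear_combination (norm := noncomm_ring) Q * hinv - hQLρ * Lᴴ - hQρ * Gᴴ
  rw [heisGen_eq_s2 L hH]
  convert posSemidef_conjTranspose_mul_self (P * L * Q) using 1
  exact hPproj.star_mul_mul_add_star_mul_add_mul_eq
    (mul_eq_zero_of_range_mulVecLin_le hsupp.le hQLρ)
    (mul_eq_zero_of_range_mulVecLin_le hsupp.le hQGρ) (lindbladDrift_add_conjTranspose L hH)

/-- the support projection of an invariant state is subharmonic:
`𝓖(P)` is positive semidefinite. -/
theorem support_projection_subharmonic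
    [Fintype n] [DecidableEq n] [Nonempty n]
    (H L : Matrix n n ℂ) (hH : H.IsHermitian)
    (ρ : Matrix n n ℂ) (hρ : ρ.PosSemidef) (hρtr : ρ.trace = 1)
    (hinv : schrodGen H L ρ = 0)
    (P : Matrix n n ℂ) (hP : P.IsHermitian) (hP2 : P * P = P)
    (hsupp : LinearMap.range P.mulVecLin = LinearMap.range ρ.mulVecLin) :
    (heisGen H L P).PosSemidef :=
  support_projection_subharmonic_general H L hH ρ hρ hinv P hP hP2 hsupp
end

section
/- Let ρ be an invariant state and let P : Matrix n n ℂ be its support projection, i.e. P is Hermitian, P*P = P, and the range of the linear map x ↦ P.mulVec x equals the range of x ↦ ρ.mulVec x. Then P*Lᴴ*(1 - P)*L*P = 0. -/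
open Matrix ComplexOrder

variable {n : Type*}

/-!
With `Q = 1 - P`, the inclusion `range ρ ⊆ range P` gives `Q * ρ = 0 = ρ * Qᴴ`, so compressing the
invariance equation by `Q` kills every term of `𝓛(ρ)` except the jump term:
`0 = Q * 𝓛(ρ) * Qᴴ = (Q * L) * ρ * (Q * L)ᴴ`. Positivity of `ρ` then forces `Q * L * ρ = 0`, and
the reverse inclusion `range P ⊆ range ρ` upgrades this to `Q * L * P = 0`.
-/

namespace Matrix

theorem mul_eq_zero_iff_range_le_ker {l m k R : Type*} [CommSemiring R] [Fintype m] [Fintype k]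
    {X : Matrix l m R} {A : Matrix m k R} :
    X * A = 0 ↔ LinearMap.range A.mulVecLin ≤ LinearMap.ker X.mulVecLin := by
  classical
  rw [LinearMap.range_le_ker_iff, ← mulVecLin_mul, ← toLin'_apply', LinearEquiv.map_eq_zero_iff]

theorem mul_eq_zero_of_range_le {l m k k' R : Type*} [CommSemiring R] [Fintype m] [Fintype k]
    [Fintype k'] {X : Matrix l m R} {A : Matrix m k R} {B : Matrix m k' R}
    (hAB : LinearMap.range A.mulVecLin ≤ LinearMap.range B.mulVecLin) (hXB : X * B = 0) :
    X * A = 0 :=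
  mul_eq_zero_iff_range_le_ker.2 (hAB.trans (mul_eq_zero_iff_range_le_ker.1 hXB))

theorem PosSemidef.mul_mul_conjTranspose_eq_zero_iff {m 𝕜 : Type*} [RCLike 𝕜] [Fintype n]
    {A : Matrix n n 𝕜} (hA : A.PosSemidef) {X : Matrix m n 𝕜} :
    X * A * Xᴴ = 0 ↔ X * A = 0 := by
  classical
  open scoped MatrixOrder in
  obtain ⟨B, rfl⟩ := CStarAlgebra.nonneg_iff_eq_star_mul_self.mp hA.nonneg
  rw [star_eq_conjTranspose, ← Matrix.mul_assoc,
    show X * Bᴴ * B * Xᴴ = X * Bᴴ * (X * Bᴴ)ᴴ by simp [Matrix.mul_assoc],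
    self_mul_conjTranspose_eq_zero, Matrix.mul_assoc, mul_conjTranspose_mul_self_eq_zero]

end Matrix

theorem mul_schrodGen_mul_conjTranspose_of_mul_eq_zero {m : Type*} [Fintype n] [DecidableEq n]
    (H L : Matrix n n ℂ) {ρ : Matrix n n ℂ} (hρ : ρ.IsHermitian) {Q : Matrix m n ℂ}
    (hQρ : Q * ρ = 0) :
    Q * schrodGen H L ρ * Qᴴ = Q * L * ρ * (Q * L)ᴴ := by
  have hρQ : ρ * Qᴴ = 0 := by rw [← hρ.eq, ← conjTranspose_mul, hQρ, conjTranspose_zero]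
  have hQρM (M : Matrix n n ℂ) : Q * (ρ * M) = 0 := by
    rw [← Matrix.mul_assoc, hQρ, Matrix.zero_mul]
  simp only [schrodGen, Matrix.mul_add, Matrix.add_mul, Matrix.mul_sub, Matrix.sub_mul,
    Matrix.mul_smul, Matrix.smul_mul, Matrix.mul_assoc, hρQ, hQρM, conjTranspose_mul]
  simp

theorem support_projection_dissipation_vanishes_general
    [Fintype n] [DecidableEq n]
    (H L : Matrix n n ℂ)
    (ρ : Matrix n n ℂ) (hρ : ρ.PosSemidef)
    (hinv : schrodGen H L ρ = 0)
    (P : Matrix n n ℂ) (hP2 : P * P = P)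
    (hsupp : LinearMap.range P.mulVecLin = LinearMap.range ρ.mulVecLin) :
    P * Lᴴ * (1 - P) * L * P = 0 := by
  have hQρ : (1 - P) * ρ = 0 :=
    mul_eq_zero_of_range_le hsupp.ge (by rw [Matrix.sub_mul, Matrix.one_mul, hP2, sub_self])
  have hQLρ : (1 - P) * L * ρ = 0 := by
    rw [← hρ.mul_mul_conjTranspose_eq_zero_iff,
      ← mul_schrodGen_mul_conjTranspose_of_mul_eq_zero H L hρ.isHermitian hQρ, hinv,
      Matrix.mul_zero, Matrix.zero_mul]
  have hQLP : (1 - P) * L * P = 0 := mul_eq_zero_of_range_le hsupp.le hQLρ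
  calc P * Lᴴ * (1 - P) * L * P = P * Lᴴ * ((1 - P) * L * P) := by simp only [Matrix.mul_assoc]
    _ = 0 := by rw [hQLP, Matrix.mul_zero]

/-- for the support projection `P` of an invariant state,
`P*Lᴴ*(1-P)*L*P = 0`. -/
theorem support_projection_dissipation_vanishes
    [Fintype n] [DecidableEq n] [Nonempty n]
    (H L : Matrix n n ℂ) (hH : H.IsHermitian)
    (ρ : Matrix n n ℂ) (hρ : ρ.PosSemidef) (hρtr : ρ.trace = 1)
    (hinv : schrodGen H L ρ = 0)
    (P : Matrix n n ℂ) (hP : P.IsHermitian) (hP2 : P * P = P)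
    (hsupp : LinearMap.range P.mulVecLin = LinearMap.range ρ.mulVecLin) :
    P * Lᴴ * (1 - P) * L * P = 0 :=
  support_projection_dissipation_vanishes_general H L ρ hρ hinv P hP2 hsupp
end

section
/- Every finite-dimensional quantum Markov system admits an invariant state: there exists a matrix ρ : Matrix n n ℂ that is positive semidefinite, has trace 1, and satisfies 𝓛(ρ) = 0. -/
open Matrix ComplexOrder

variable {n : Type*}

/-!
If no state were invariant, the compact convex set `𝓛(states)` would miss `0`, and Hahn–Banach
would give a Hermitian observable `X` with `Re tr(X 𝓛(ρ)) > 0` for every state `ρ`. Since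
`tr(X 𝓛(ρ)) = tr(𝓖(X) ρ)`, this says `⟪v, 𝓖(X) v⟫ > 0` for every unit vector `v`. That contradicts
the maximum principle for `𝓖`: at a unit eigenvector `v` of `X` for its largest eigenvalue `r`,
`⟪v, 𝓖(X) v⟫ = -⟪Lv, (r - X) Lv⟫ ≤ 0`.
-/

namespace Matrix

theorem exists_trace_mul_eq {R : Type*} [CommSemiring R] [Fintype n] [DecidableEq n]
    (f : Matrix n n R →ₗ[R] R) : ∃ Y : Matrix n n R, ∀ A, f A = trace (Y * A) := by
  refine ⟨of fun j i => f (single i j 1), fun A => ?_⟩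
  have hsingle (i j : n) : single i j (A i j) = A i j • single i j (1 : R) := by
    rw [smul_single, smul_eq_mul, mul_one]
  conv_lhs => rw [matrix_eq_sum_single A]
  simp only [map_sum, hsingle, map_smul, smul_eq_mul, trace, diag, mul_apply, of_apply]
  rw [Finset.sum_comm]
  exact Finset.sum_congr rfl fun _ _ => Finset.sum_congr rfl fun _ _ => mul_comm _ _

theorem PosSemidef.normSq_apply_le {A : Matrix n n ℂ} (hA : A.PosSemidef) (i j : n) :
    Complex.normSq (A i j) ≤ (A i i).re * (A j j).re := by
  have hdet := (hA.submatrix ![i, j]).det_nonneg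
  simp only [det_fin_two, submatrix_apply, Matrix.cons_val_zero, Matrix.cons_val_one,
    ← hA.1.apply i j, Complex.star_def, ← Complex.normSq_eq_conj_mul_self, sub_nonneg] at hdet
  have hii : (A i i).im = 0 := (Complex.le_def.mp hA.diag_nonneg).2.symm
  have hre := (Complex.le_def.mp hdet).1
  rw [Complex.ofReal_re, Complex.mul_re, hii, zero_mul, sub_zero] at hre
  rwa [← hA.1.apply i j, Complex.star_def, Complex.normSq_conj]

variable [Fintype n] [DecidableEq n]

theorem exists_isHermitian_re_eq_re_trace_mul (f : Matrix n n ℂ →ₗ[ℂ] ℂ) :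
    ∃ X : Matrix n n ℂ, X.IsHermitian ∧
      ∀ A : Matrix n n ℂ, A.IsHermitian → (f A).re = (trace (X * A)).re := by
  obtain ⟨Y, hY⟩ := exists_trace_mul_eq f
  refine ⟨realPart Y, (realPart Y).2, fun A hA => ?_⟩
  have hstar : trace (star Y * A) = star (trace (Y * A)) := by
    rw [← trace_conjTranspose, conjTranspose_mul, hA.eq, trace_mul_comm, star_eq_conjTranspose]
  rw [realPart_apply_coe, smul_mul, add_mul, trace_smul, trace_add, hstar, hY, Complex.smul_re,
    Complex.add_re, Complex.star_def, Complex.conj_re]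
  ring

theorem IsHermitian.exists_unit_eigenvector_max_eigenvalue [Nonempty n] {X : Matrix n n ℂ}
    (hX : X.IsHermitian) : ∃ (r : ℝ) (v : n → ℂ),
      star v ⬝ᵥ v = 1 ∧ X *ᵥ v = (r : ℂ) • v ∧ (r • 1 - X).PosSemidef := by
  obtain ⟨i, -, hi⟩ := Finset.exists_max_image Finset.univ hX.eigenvalues Finset.univ_nonempty
  refine ⟨hX.eigenvalues i, hX.eigenvectorBasis i, ?_, ?_, ?_⟩
  · rw [dotProduct_comm, ← EuclideanSpace.inner_eq_star_dotProduct, inner_self_eq_norm_sq_to_K,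
      (hX.eigenvectorBasis).norm_eq_one]
    norm_num
  · rw [hX.mulVec_eigenvectorBasis, Complex.coe_smul]
  · open MatrixOrder in
    rw [← Algebra.algebraMap_eq_smul_one, ← le_iff]
    refine le_algebraMap_of_spectrum_le (fun x hx => ?_) hX.isSelfAdjoint
    obtain ⟨j, rfl⟩ := hX.spectrum_real_eq_range_eigenvalues ▸ hx
    exact hi j (Finset.mem_univ j)

end Matrix

-- `Matrix` is a type synonym, so the instance for the function space is not found through it.
instance Matrix.instLocallyConvexSpace {m E : Type*} [Fintype m] [Fintype n]
    [NormedAddCommGroup E] [NormedSpace ℝ E] : LocallyConvexSpace ℝ (Matrix m n E) :=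
  inferInstanceAs (LocallyConvexSpace ℝ (m → n → E))

section States

variable [Fintype n]

def states (n : Type*) [Fintype n] : Set (Matrix n n ℂ) := {ρ | ρ.PosSemidef ∧ ρ.trace = 1}

theorem vecMulVec_mem_states {v : n → ℂ} (hv : star v ⬝ᵥ v = 1) :
    vecMulVec v (star v) ∈ states n :=
  ⟨posSemidef_vecMulVec_self_star v, by rw [trace_vecMulVec, dotProduct_comm, hv]⟩

theorem convex_states : Convex ℝ (states n) := by
  rintro ρ ⟨hρ, hρ1⟩ σ ⟨hσ, hσ1⟩ a b ha hb hab
  refine ⟨(hρ.smul ha).add (hσ.smul hb), ?_⟩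
  rw [trace_add, trace_smul, trace_smul, hρ1, hσ1, ← add_smul, hab, one_smul]

theorem norm_apply_le_one_of_mem_states {ρ : Matrix n n ℂ} (hρ : ρ ∈ states n) (i j : n) :
    ‖ρ i j‖ ≤ 1 := by
  have hdiag (k : n) : (ρ k k).re ≤ 1 := by
    have hle : ρ k k ≤ ρ.trace :=
      Finset.single_le_sum (f := fun l => ρ l l) (fun l _ => hρ.1.diag_nonneg) (Finset.mem_univ k)
    simpa [hρ.2] using (Complex.le_def.mp hle).1
  have hsq : ‖ρ i j‖ ^ 2 ≤ 1 := by
    rw [← Complex.normSq_eq_norm_sq]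
    calc Complex.normSq (ρ i j) ≤ (ρ i i).re * (ρ j j).re := hρ.1.normSq_apply_le i j
      _ ≤ 1 * 1 := mul_le_mul (hdiag i) (hdiag j)
          (Complex.le_def.mp hρ.1.diag_nonneg).1 zero_le_one
      _ = 1 := one_mul 1
  exact (sq_le_one_iff₀ (norm_nonneg _)).mp hsq

theorem isClosed_states : IsClosed (states n) := by
  simp only [states, posSemidef_iff_dotProduct_mulVec, IsHermitian, Set.ofPred_and,
    Set.ofPred_forall]
  refine ((isClosed_eq (by fun_prop) continuous_id).inter
    (isClosed_iInter fun x => isClosed_le continuous_const (by fun_prop))).inter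
    (isClosed_eq (by fun_prop) continuous_const)

theorem isCompact_states : IsCompact (states n) := by
  refine (isCompact_univ_pi fun _ => isCompact_univ_pi fun _ =>
    isCompact_closedBall (0 : ℂ) 1).of_isClosed_subset isClosed_states ?_
  intro ρ hρ i _ j _
  simpa using norm_apply_le_one_of_mem_states hρ i j

end States

section Generators

variable [Fintype n] [DecidableEq n] (H L : Matrix n n ℂ)

noncomputable def schrodGenₗ : Matrix n n ℂ →ₗ[ℂ] Matrix n n ℂ where
  toFun := schrodGen H L
  map_add' ρ σ := by
    simp only [schrodGen, mul_add, add_mul, smul_add]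
    module
  map_smul' a ρ := by
    simp only [schrodGen, Matrix.mul_smul, Matrix.smul_mul, smul_add, smul_sub, smul_smul,
      mul_comm, RingHom.id_apply]

theorem continuous_schrodGen : Continuous (schrodGen H L) :=
  (schrodGenₗ H L).continuous_of_finiteDimensional

variable {H L} in
theorem Matrix.IsHermitian.schrodGen {ρ : Matrix n n ℂ} (hρ : ρ.IsHermitian) (hH : H.IsHermitian) :
    (schrodGen H L ρ).IsHermitian := by
  simp only [IsHermitian, _root_.schrodGen, conjTranspose_add, conjTranspose_sub,
    conjTranspose_smul, conjTranspose_mul, conjTranspose_conjTranspose, hH.eq, hρ.eq, star_neg,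
    Complex.star_def, Complex.conj_I, mul_assoc, map_div₀, map_one, map_ofNat]
  module

theorem trace_mul_schrodGen (X ρ : Matrix n n ℂ) :
    trace (X * schrodGen H L ρ) = trace (heisGen H L X * ρ) := by
  simp only [schrodGen, heisGen, mul_add, mul_sub, add_mul, sub_mul, Matrix.mul_smul,
    Matrix.smul_mul, trace_add, trace_sub, trace_smul, ← mul_assoc]
  rw [trace_mul_cycle X ρ H, trace_mul_comm (X * L * ρ) Lᴴ, mul_assoc (X * ρ) Lᴴ L,
    trace_mul_cycle X ρ (Lᴴ * L)]
  simp only [← mul_assoc, smul_eq_mul]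
  ring

theorem dotProduct_heisGen_mulVec_of_mulVec_eq_smul {X : Matrix n n ℂ} (hX : X.IsHermitian)
    {r : ℝ} {v : n → ℂ} (hXv : X *ᵥ v = (r : ℂ) • v) :
    star v ⬝ᵥ heisGen H L X *ᵥ v = -(star (L *ᵥ v) ⬝ᵥ (r • 1 - X) *ᵥ (L *ᵥ v)) := by
  have hvX : star v ᵥ* X = (r : ℂ) • star v := by
    rw [← hX.eq, ← star_mulVec, hXv, star_smul, Complex.star_def, Complex.conj_ofReal]
  have hX_left (u : n → ℂ) : star v ⬝ᵥ X *ᵥ u = r * (star v ⬝ᵥ u) := by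
    rw [dotProduct_mulVec, hvX, smul_dotProduct, smul_eq_mul]
  have hL_left (u : n → ℂ) : star v ⬝ᵥ Lᴴ *ᵥ u = star (L *ᵥ v) ⬝ᵥ u := by
    rw [dotProduct_mulVec, star_mulVec]
  simp only [heisGen, add_mulVec, sub_mulVec, smul_mulVec, ← mulVec_mulVec, dotProduct_add,
    dotProduct_sub, dotProduct_smul, hXv, mulVec_smul, hX_left, hL_left, one_mulVec, smul_eq_mul,
    Complex.real_smul]
  ring

theorem re_trace_mul_schrodGen_vecMulVec_nonpos {X : Matrix n n ℂ} (hX : X.IsHermitian)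
    {r : ℝ} {v : n → ℂ} (hXv : X *ᵥ v = (r : ℂ) • v) (hXr : (r • 1 - X).PosSemidef) :
    (trace (X * schrodGen H L (vecMulVec v (star v)))).re ≤ 0 := by
  rw [trace_mul_schrodGen, mul_vecMulVec, trace_vecMulVec, dotProduct_comm,
    dotProduct_heisGen_mulVec_of_mulVec_eq_smul H L hX hXv, Complex.neg_re, neg_nonpos]
  exact (Complex.le_def.mp (hXr.dotProduct_mulVec_nonneg _)).1

end Generators

/-- every finite-dimensional quantum Markov system admits an invariant state. -/
theorem exists_invariant_state
    [Fintype n] [DecidableEq n] [Nonempty n]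
    (H L : Matrix n n ℂ) (hH : H.IsHermitian) :
    ∃ ρ : Matrix n n ℂ, ρ.PosSemidef ∧ ρ.trace = 1 ∧ schrodGen H L ρ = 0 := by
  by_contra! hnone
  have h0 : (0 : Matrix n n ℂ) ∉ schrodGen H L '' states n :=
    fun ⟨ρ, hρ, h⟩ => hnone ρ hρ.1 hρ.2 h
  obtain ⟨f, u, hf0, hf⟩ := RCLike.geometric_hahn_banach_point_closed (𝕜 := ℂ)
    (convex_states.linear_image ((schrodGenₗ H L).restrictScalars ℝ))
    (isCompact_states.image (continuous_schrodGen H L)).isClosed h0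
  rw [map_zero, map_zero] at hf0
  obtain ⟨X, hX, hfX⟩ := exists_isHermitian_re_eq_re_trace_mul f.toLinearMap
  obtain ⟨r, v, hv, hXv, hXr⟩ := hX.exists_unit_eigenvector_max_eigenvalue
  have hP := vecMulVec_mem_states hv
  have hpos : 0 < (f (schrodGen H L (vecMulVec v (star v)))).re := hf0.trans (hf _ ⟨_, hP, rfl⟩)
  rw [← f.coe_coe, hfX _ (hP.1.isHermitian.schrodGen hH)] at hpos
  exact hpos.not_ge (re_trace_mul_schrodGen_vecMulVec_nonpos H L hX hXv hXr)
end

section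
/- Let (p_k)_{k ∈ ℕ} be a tight sequence of probability mass functions on ℕ. Then there exist a strictly increasing function φ : ℕ → ℕ and a probability mass function p on ℕ such that for every i : ℕ, p_{φ(k)} i → p i as k → ∞. -/
/-! By Tychonoff, `[0,1]^ℕ` is compact and metrizable, so the sequence `p k` has a pointwise
convergent subsequence. The limit `q` is nonnegative, and each finite partial sum of `q` is the
limit of the corresponding partial sums of the `p (φ k)`; these lie in `(1 - ε, 1]` for a
`range m` chosen by tightness, so `∑' i, q i = 1`: tightness is exactly what prevents mass from
escaping to infinity. -/

open Filter Topology Finset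

theorem exists_strictMono_tendsto_of_forall_mem_Icc {ι : Type*} [Countable ι] {a b : ι → ℝ}
    {f : ℕ → ι → ℝ} (hf : ∀ k i, f k i ∈ Set.Icc (a i) (b i)) :
    ∃ q : ι → ℝ, (∀ i, q i ∈ Set.Icc (a i) (b i)) ∧ ∃ φ : ℕ → ℕ, StrictMono φ ∧
      ∀ i, Tendsto (fun k => f (φ k) i) atTop (𝓝 (q i)) := by
  obtain ⟨q, hq, φ, hφ, hlim⟩ :=
    (isCompact_univ_pi fun i => isCompact_Icc (a := a i) (b := b i)).tendsto_subseq
      fun k i _ => hf k i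
  exact ⟨q, fun i => hq i (Set.mem_univ i), φ, hφ, tendsto_pi_nhds.1 hlim⟩

section TsumEqOne

variable {α : Type*} {f : α → ℝ}

theorem summable_of_tsum_eq_one (h : ∑' i, f i = 1) : Summable f := by
  by_contra hf
  rw [tsum_eq_zero_of_not_summable hf] at h
  exact zero_ne_one h

theorem sum_le_one_of_tsum_eq_one (hf : ∀ i, 0 ≤ f i) (h : ∑' i, f i = 1) (s : Finset α) :
    ∑ i ∈ s, f i ≤ 1 :=
  h ▸ (summable_of_tsum_eq_one h).sum_le_tsum s fun i _ => hf i

theorem le_one_of_tsum_eq_one (hf : ∀ i, 0 ≤ f i) (h : ∑' i, f i = 1) (i : α) : f i ≤ 1 := by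
  simpa using sum_le_one_of_tsum_eq_one hf h {i}

end TsumEqOne

theorem tsum_eq_one_of_tendsto_of_tight {f : ℕ → ℕ → ℝ} {q : ℕ → ℝ} (hq : ∀ i, 0 ≤ q i)
    (hlim : ∀ i, Tendsto (fun k => f k i) atTop (𝓝 (q i)))
    (hle : ∀ k (s : Finset ℕ), ∑ i ∈ s, f k i ≤ 1)
    (htight : ∀ ε > (0 : ℝ), ∃ m : ℕ, ∀ k, 1 - ε < ∑ i ∈ range m, f k i) :
    ∑' i, q i = 1 := by
  have hlim_sum (m : ℕ) :
      Tendsto (fun k => ∑ i ∈ range m, f k i) atTop (𝓝 (∑ i ∈ range m, q i)) :=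
    tendsto_finsetSum _ fun i _ => hlim i
  have hq_le (m : ℕ) : ∑ i ∈ range m, q i ≤ 1 :=
    le_of_tendsto' (hlim_sum m) fun k => hle k (range m)
  refine le_antisymm (Real.tsum_le_of_sum_range_le hq hq_le) (le_of_forall_sub_le fun ε hε => ?_)
  obtain ⟨m, hm⟩ := htight ε hε
  calc 1 - ε ≤ ∑ i ∈ range m, q i := ge_of_tendsto' (hlim_sum m) fun k => (hm k).le
    _ ≤ ∑' i, q i := (summable_of_sum_range_le hq hq_le).sum_le_tsum _ fun i _ => hq i

/-- a tight sequence of probability mass functions on `ℕ` admits a subsequence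
converging pointwise to a probability mass function. -/
theorem tight_sequence_has_convergent_subsequence
    (p : ℕ → ℕ → ℝ)
    (hp0 : ∀ k i, 0 ≤ p k i) (hp1 : ∀ k, ∑' i, p k i = 1)
    (htight : ∀ ε > (0 : ℝ), ∃ m : ℕ, ∀ k, 1 - ε < ∑ i ∈ Finset.range m, p k i) :
    ∃ (φ : ℕ → ℕ) (q : ℕ → ℝ), StrictMono φ ∧ (∀ i, 0 ≤ q i) ∧ (∑' i, q i = 1) ∧
      ∀ i, Filter.Tendsto (fun k => p (φ k) i) Filter.atTop (nhds (q i)) := by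
  obtain ⟨q, hq, φ, hφ, hlim⟩ := exists_strictMono_tendsto_of_forall_mem_Icc
    (a := 0) (b := 1) fun k i => ⟨hp0 k i, le_one_of_tsum_eq_one (hp0 k) (hp1 k) i⟩
  have hq0 (i : ℕ) : 0 ≤ q i := (hq i).1
  refine ⟨φ, q, hφ, hq0, ?_, hlim⟩
  exact tsum_eq_one_of_tendsto_of_tight hq0 hlim
    (fun k => sum_le_one_of_tsum_eq_one (hp0 (φ k)) (hp1 (φ k)))
    fun ε hε => (htight ε hε).imp fun m hm k => hm (φ k)
end

section
/- Let V : Matrix n n ℂ be Hermitian and positive semidefinite with -𝓖(V) positive semidefinite (the condition 𝓖(V) ≤ 0) and 𝓖(V)*V = V*𝓖(V), and let ρ be an invariant state. Then trace(ρ * (V*𝓖(V) + 𝓖(V)*V)) = 0 and trace(ρ * ((Lᴴ*V - V*Lᴴ)*(V*L - L*V))) = 0. -/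
open Matrix ComplexOrder

variable {n : Type*}

/-!
Duality gives `tr(ρ 𝓖(X)) = tr(𝓛(ρ) X) = 0` for every `X`. Applied to `X = V`, the two positive
semidefinite matrices `ρ` and `-𝓖(V)` have trace-orthogonal product, so `ρ 𝓖(V) = 𝓖(V) ρ = 0`,
which kills `tr(ρ (V 𝓖(V) + 𝓖(V) V))`. Applied to `X = V²`, the Leibniz defect
`𝓖(V²) - V 𝓖(V) - 𝓖(V) V = [Lᴴ, V][V, L]` then has vanishing expectation too.
-/

namespace Matrix.PosSemidef

variable {𝕜 : Type*} [RCLike 𝕜] [Fintype n] [DecidableEq n]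

open scoped MatrixOrder in
theorem mul_eq_zero_of_trace_mul_eq_zero {A B : Matrix n n 𝕜} (hA : A.PosSemidef)
    (hB : B.PosSemidef) (h : (A * B).trace = 0) : A * B = 0 := by
  obtain ⟨X, rfl⟩ := CStarAlgebra.nonneg_iff_eq_star_mul_self.mp hA.nonneg
  obtain ⟨Y, rfl⟩ := CStarAlgebra.nonneg_iff_eq_star_mul_self.mp hB.nonneg
  simp only [star_eq_conjTranspose] at h ⊢
  -- `tr(XᴴX YᴴY)` is the squared Frobenius norm of `X Yᴴ`.
  have hXY : X * Yᴴ = 0 := by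
    rw [← trace_mul_conjTranspose_self_eq_zero_iff, ← h, conjTranspose_mul,
      conjTranspose_conjTranspose, trace_mul_comm (Xᴴ * X), Matrix.mul_assoc X, trace_mul_comm X]
    simp only [Matrix.mul_assoc]
  calc Xᴴ * X * (Yᴴ * Y) = Xᴴ * (X * Yᴴ) * Y := by simp only [Matrix.mul_assoc]
    _ = 0 := by rw [hXY, Matrix.mul_zero, Matrix.zero_mul]

end Matrix.PosSemidef

section Generators

variable [Fintype n] [DecidableEq n]

theorem trace_mul_heisGen (H L ρ X : Matrix n n ℂ) :
    (ρ * heisGen H L X).trace = (schrodGen H L ρ * X).trace := by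
  simp only [heisGen, schrodGen, Matrix.mul_add, Matrix.add_mul, Matrix.mul_sub, Matrix.sub_mul,
    Matrix.smul_mul, Matrix.mul_smul, Matrix.mul_assoc, trace_add, trace_sub, trace_smul,
    smul_eq_mul]
  have e1 : (ρ * (X * H)).trace = (H * (ρ * X)).trace := by
    rw [← Matrix.mul_assoc, trace_mul_cycle, Matrix.mul_assoc]
  have e2 : (ρ * (Lᴴ * (X * L))).trace = (L * (ρ * (Lᴴ * X))).trace := by
    rw [← Matrix.mul_assoc, ← Matrix.mul_assoc, trace_mul_comm]
    simp only [Matrix.mul_assoc]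
  have e3 : (ρ * (X * (Lᴴ * L))).trace = (Lᴴ * (L * (ρ * X))).trace := by
    rw [← Matrix.mul_assoc, trace_mul_comm, ← Matrix.mul_assoc, Matrix.mul_assoc, Matrix.mul_assoc]
  rw [e1, e2, e3]
  ring

theorem trace_mul_heisGen_eq_zero {H L ρ : Matrix n n ℂ} (hρ : schrodGen H L ρ = 0)
    (X : Matrix n n ℂ) : (ρ * heisGen H L X).trace = 0 := by
  rw [trace_mul_heisGen, hρ, Matrix.zero_mul, trace_zero]

theorem heisGen_mul_self (H L V : Matrix n n ℂ) :
    heisGen H L (V * V) = V * heisGen H L V + heisGen H L V * V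
      + (Lᴴ * V - V * Lᴴ) * (V * L - L * V) := by
  simp only [heisGen, Matrix.mul_add, Matrix.add_mul, Matrix.mul_sub, Matrix.sub_mul,
    Matrix.smul_mul, Matrix.mul_smul, Matrix.mul_assoc]
  module

end Generators

theorem invariant_state_dissipation_identities_general
    [Fintype n] [DecidableEq n]
    (H L : Matrix n n ℂ)
    (V : Matrix n n ℂ)
    (hGV : (-(heisGen H L V)).PosSemidef)
    (ρ : Matrix n n ℂ) (hρ : ρ.PosSemidef)
    (hinv : schrodGen H L ρ = 0) :
    (ρ * (V * heisGen H L V + heisGen H L V * V)).trace = 0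
      ∧ (ρ * ((Lᴴ * V - V * Lᴴ) * (V * L - L * V))).trace = 0 := by
  set G := heisGen H L V
  have hρG : ρ * G = 0 := by
    have h := hρ.mul_eq_zero_of_trace_mul_eq_zero hGV
      (by rw [Matrix.mul_neg, trace_neg, trace_mul_heisGen_eq_zero hinv, neg_zero])
    rwa [Matrix.mul_neg, neg_eq_zero] at h
  have hGρ : G * ρ = 0 := by
    simpa [hρ.1.eq, show Gᴴ = G by simpa using hGV.1.eq] using congrArg conjTranspose hρG
  have hsym : (ρ * (V * G + G * V)).trace = 0 := by
    rw [Matrix.mul_add, trace_add, ← Matrix.mul_assoc, trace_mul_cycle, hGρ, ← Matrix.mul_assoc,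
      hρG]
    simp
  refine ⟨hsym, ?_⟩
  rw [show (Lᴴ * V - V * Lᴴ) * (V * L - L * V) = heisGen H L (V * V) - (V * G + G * V) by
    rw [heisGen_mul_self]; abel, Matrix.mul_sub, trace_sub, trace_mul_heisGen_eq_zero hinv, hsym,
    sub_zero]

/-- for a Lyapunov operator `V` with `𝓖(V) ≤ 0` commuting with `V`, and an
invariant state `ρ`, both `⟨V·𝓖(V) + 𝓖(V)·V⟩_ρ` and `⟨[Lᴴ,V][V,L]⟩_ρ` vanish. -/
theorem invariant_state_dissipation_identities
    [Fintype n] [DecidableEq n] [Nonempty n]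
    (H L : Matrix n n ℂ) (hH : H.IsHermitian)
    (V : Matrix n n ℂ) (hV : V.IsHermitian) (hVpos : V.PosSemidef)
    (hGV : (-(heisGen H L V)).PosSemidef)
    (hcomm : heisGen H L V * V = V * heisGen H L V)
    (ρ : Matrix n n ℂ) (hρ : ρ.PosSemidef) (hρtr : ρ.trace = 1)
    (hinv : schrodGen H L ρ = 0) :
    (ρ * (V * heisGen H L V + heisGen H L V * V)).trace = 0
      ∧ (ρ * ((Lᴴ * V - V * Lᴴ) * (V * L - L * V))).trace = 0 :=
  invariant_state_dissipation_identities_general H L V hGV ρ hρ hinv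
end
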